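/- arXiv:2303.08668 — 2 statements merged into one kernel-verified Lean document; each statement's English description precedes it below -/
import Mathlib

section
/- Let L be an N×N real symmetric matrix with zero row sums and let C ⊆ {1,...,N} have k ≥ 2 elements. Suppose that there exists a constant c ∈ ℝ such that L_{pq} = c for all distinct p, q ∈ C, and that L_{pj} = L_{qj} for all p, q ∈ C and all j ∉ C. Then there exists λ ∈ ℝ such that Lu = λu for every u ∈ U; that is, the (k−1)-dimensional subspace U is contained in a single eigenspace of L. -/
/-!
Inside `C` the matrix acts on `u ∈ U` as
`L i i • u i + c • ∑_{j ∈ C, j ≠ i} u j = (L i i - c) • u i`, and the diagonal entries `L i i`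
agree on `C` because the zero row sums and the shared outside rows force them. Outside `C`,
symmetry makes the column `j ↦ L i j` constant on `C`, so `(L *ᵥ u) i` is a multiple of
`∑_{j ∈ C} u j = 0`.
-/

open Finset Matrix

namespace Matrix

variable {ι R : Type*} [CommRing R]
  {L : Matrix ι ι R} {C : Finset ι} {c : R}

theorem mulVec_apply_eq_sum_of_support_subset [Fintype ι] {u : ι → R} (hu : ∀ j ∉ C, u j = 0)
    (i : ι) :
    (L *ᵥ u) i = ∑ j ∈ C, L i j * u j :=
  (sum_subset (subset_univ C) fun j _ hj => by rw [hu j hj, mul_zero]).symm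

theorem sum_row_on_eq_of_offDiag_eq [DecidableEq ι] (hc : ∀ p ∈ C, ∀ q ∈ C, p ≠ q → L p q = c)
    {p : ι} (hp : p ∈ C) :
    ∑ j ∈ C, L p j = L p p - c + #C • c := by
  rw [← add_sum_erase C _ hp,
    sum_congr rfl fun j hj => hc p hp j (mem_of_mem_erase hj) (ne_of_mem_erase hj).symm,
    sum_const, card_erase_of_mem hp]
  obtain ⟨n, hn⟩ := Nat.exists_eq_succ_of_ne_zero (card_ne_zero_of_mem hp)
  rw [hn, Nat.succ_sub_one, succ_nsmul]
  abel

theorem diag_eq_of_sum_row_eq_zero [Fintype ι] [DecidableEq ι] (hrow : ∀ i, ∑ j, L i j = 0)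
    (hc : ∀ p ∈ C, ∀ q ∈ C, p ≠ q → L p q = c)
    (hout : ∀ p ∈ C, ∀ q ∈ C, ∀ j ∉ C, L p j = L q j) {p q : ι} (hp : p ∈ C) (hq : q ∈ C) :
    L p p = L q q := by
  have hsplit : ∀ r ∈ C, L r r - c + #C • c + ∑ j ∈ Cᶜ, L r j = 0 := fun r hr => by
    rw [← sum_row_on_eq_of_offDiag_eq hc hr, sum_add_sum_compl, hrow]
  have houtsum : ∑ j ∈ Cᶜ, L p j = ∑ j ∈ Cᶜ, L q j :=
    sum_congr rfl fun j hj => hout p hp q hq j (mem_compl.1 hj)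
  linear_combination hsplit p hp - hsplit q hq - houtsum

theorem mulVec_eq_smul_of_uniform_cluster [Fintype ι] [DecidableEq ι] (hsym : L.IsSymm)
    (hrow : ∀ i, ∑ j, L i j = 0)
    (hc : ∀ p ∈ C, ∀ q ∈ C, p ≠ q → L p q = c)
    (hout : ∀ p ∈ C, ∀ q ∈ C, ∀ j ∉ C, L p j = L q j) {p : ι} (hp : p ∈ C)
    {u : ι → R} (hu : ∀ j ∉ C, u j = 0) (hsum : ∑ j ∈ C, u j = 0) :
    L *ᵥ u = (L p p - c) • u := by
  ext i
  rw [mulVec_apply_eq_sum_of_support_subset hu, Pi.smul_apply, smul_eq_mul]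
  by_cases hi : i ∈ C
  · have hrest : ∑ j ∈ C.erase i, L i j * u j = c * -u i := by
      rw [sum_congr rfl fun j hj => by
          rw [hc i hi j (mem_of_mem_erase hj) (ne_of_mem_erase hj).symm],
        ← mul_sum, sum_erase_eq_sub hi, hsum, zero_sub]
    rw [← add_sum_erase C _ hi, hrest, diag_eq_of_sum_row_eq_zero hrow hc hout hi hp]
    ring
  · have hcol : ∀ j ∈ C, L i j = L p i := fun j hj => by
      rw [← hsym.apply i j, hout j hj p hp i hi]
    rw [sum_congr rfl fun j hj => by rw [hcol j hj], ← mul_sum, hsum, hu i hi]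
    ring

end Matrix

theorem uniform_clique_sec_gives_degenerate_eigenspace_general
    (N : ℕ) (L : Matrix (Fin N) (Fin N) ℝ)
    (hsym : L.IsSymm) (hrow : ∀ i, ∑ j, L i j = 0)
    (C : Finset (Fin N))
    (c : ℝ) (hc : ∀ p ∈ C, ∀ q ∈ C, p ≠ q → L p q = c)
    (hSEC : ∀ p ∈ C, ∀ q ∈ C, ∀ j ∉ C, L p j = L q j) :
    ∃ lam : ℝ, ∀ u : Fin N → ℝ, (∀ j ∉ C, u j = 0) → (∑ i, u i = 0) →
      L.mulVec u = lam • u := by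
  rcases C.eq_empty_or_nonempty with rfl | ⟨p, hp⟩
  · refine ⟨0, fun u hu _ => ?_⟩
    rw [show u = 0 from funext fun j => hu j (notMem_empty j), mulVec_zero, smul_zero]
  refine ⟨L p p - c, fun u hu hsum => ?_⟩
  have hsumC : ∑ j ∈ C, u j = 0 := by
    rwa [sum_subset (subset_univ C) fun j _ hj => hu j hj]
  exact mulVec_eq_smul_of_uniform_cluster hsym hrow hc hSEC hp hu hsumC

/-- If the graph induced by C is complete with uniform weights or empty
(L p q = c for all distinct p, q ∈ C) and C is a strong equitable cluster of a real
symmetric N×N matrix L with zero row sums, then the whole subspace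
U = {u : u_j = 0 for j ∉ C, ∑ u_i = 0} is contained in a single eigenspace of L. -/
theorem uniform_clique_sec_gives_degenerate_eigenspace
    (N : ℕ) (L : Matrix (Fin N) (Fin N) ℝ)
    (hsym : L.IsSymm) (hrow : ∀ i, ∑ j, L i j = 0)
    (C : Finset (Fin N)) (hk : 2 ≤ C.card)
    (c : ℝ) (hc : ∀ p ∈ C, ∀ q ∈ C, p ≠ q → L p q = c)
    (hSEC : ∀ p ∈ C, ∀ q ∈ C, ∀ j ∉ C, L p j = L q j) :
    ∃ lam : ℝ, ∀ u : Fin N → ℝ, (∀ j ∉ C, u j = 0) → (∑ i, u i = 0) →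
      L.mulVec u = lam • u :=
  uniform_clique_sec_gives_degenerate_eigenspace_general N L hsym hrow C c hc hSEC
end

section
/- Let L be an N×N real symmetric matrix with zero row sums and let C ⊆ {1,...,N} have k ≥ 2 elements. Suppose there exists λ ∈ ℝ such that Lu = λu for every u ∈ U. Then every permutation σ of {1,...,N} that fixes all indices outside C pointwise preserves L, i.e. its permutation matrix P satisfies P⁻¹LP = L. -/
/-!
Testing the eigen-equation on the vectors `e_a - e_b` (`a, b ∈ C`), which lie in `U`, shows that
the columns of `L - λ I` indexed by `C` all coincide. A permutation fixing every index outside `C`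
therefore permutes only equal columns of `L - λ I`, and, by symmetry, only equal rows; so it
preserves `L - λ I`, and with it `L`.
-/

open Equiv

namespace Matrix

variable {n : Type*}

lemma submatrix_id_perm_eq_self_of_col_eq {m α : Type*} {M : Matrix m n α} {C : Finset n}
    (hM : ∀ a ∈ C, ∀ b ∈ C, M.col a = M.col b) {σ : Perm n} (hσ : ∀ j ∉ C, σ j = j) :
    M.submatrix id σ = M := by
  ext i j
  by_cases hj : j ∈ C
  · have hσj : σ j ∈ C := by
      by_contra hσj
      rw [σ.injective (hσ _ hσj)] at hσj
      exact hσj hj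
    exact congrFun (hM _ hσj _ hj) i
  · simp [hσ j hj]

lemma IsSymm.submatrix_perm_eq_self {α : Type*} {M : Matrix n n α} (hM : M.IsSymm) {σ : Perm n}
    (h : M.submatrix id σ = M) : M.submatrix σ σ = M := by
  have hcol : ∀ i j, M i (σ j) = M i j := fun i j => congrFun (congrFun h i) j
  ext i j
  calc M (σ i) (σ j) = M j (σ i) := by rw [hcol, hM.apply]
    _ = M i j := by rw [hcol, hM.apply]

variable {R : Type*} [Fintype n] [DecidableEq n]

section Ring

variable [Ring R]

lemma col_sub_smul_one_eq_of_forall_mulVec_eq_smul {L : Matrix n n R} {C : Finset n} {lam : R}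
    (hU : ∀ u : n → R, (∀ j ∉ C, u j = 0) → ∑ i, u i = 0 → L *ᵥ u = lam • u)
    {a b : n} (ha : a ∈ C) (hb : b ∈ C) :
    (L - lam • 1).col a = (L - lam • 1).col b := by
  have hsupp : ∀ j ∉ C, (Pi.single a 1 - Pi.single b 1 : n → R) j = 0 := by
    intro j hj
    have hja : j ≠ a := fun h => hj (h ▸ ha)
    have hjb : j ≠ b := fun h => hj (h ▸ hb)
    simp [hja, hjb]
  have hsum : ∑ i, (Pi.single a 1 - Pi.single b 1 : n → R) i = 0 := by
    simp [Finset.sum_sub_distrib]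
  have heig := hU _ hsupp hsum
  rw [← sub_eq_zero, ← mulVec_single_one, ← mulVec_single_one, ← mulVec_sub, sub_mulVec, heig,
    smul_mulVec, one_mulVec, sub_self]

lemma submatrix_perm_eq_self_of_forall_mulVec_eq_smul {L : Matrix n n R} (hL : L.IsSymm)
    {C : Finset n} {lam : R}
    (hU : ∀ u : n → R, (∀ j ∉ C, u j = 0) → ∑ i, u i = 0 → L *ᵥ u = lam • u)
    {σ : Perm n} (hσ : ∀ j ∉ C, σ j = j) :
    L.submatrix σ σ = L := by
  have hM : (L - lam • 1).IsSymm := hL.sub (isSymm_one.smul lam)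
  have hcols := submatrix_id_perm_eq_self_of_col_eq
    (fun _ ha _ hb => col_sub_smul_one_eq_of_forall_mulVec_eq_smul hU ha hb) hσ
  have hshift := hM.submatrix_perm_eq_self hcols
  ext i j
  simpa [one_apply, σ.injective.eq_iff] using congrFun (congrFun hshift i) j

end Ring

lemma inv_permMatrix_mul_mul_permMatrix [CommRing R] (σ : Perm n) (A : Matrix n n R) :
    (σ.permMatrix R)⁻¹ * A * σ.permMatrix R = A.submatrix ⇑σ⁻¹ ⇑σ⁻¹ := by
  have hinv : (σ.permMatrix R)⁻¹ = σ⁻¹.permMatrix R := by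
    apply inv_eq_left_inv
    rw [← permMatrix_mul, mul_inv_cancel, permMatrix_one]
  rw [hinv, PEquiv.toMatrix_toPEquiv_mul, PEquiv.mul_toMatrix_toPEquiv, submatrix_submatrix]
  rfl

end Matrix

theorem degenerate_eigenspace_gives_symmetries_general
    (N : ℕ) (L : Matrix (Fin N) (Fin N) ℝ)
    (hsym : L.IsSymm)
    (C : Finset (Fin N))
    (lam : ℝ)
    (hU : ∀ u : Fin N → ℝ, (∀ j ∉ C, u j = 0) → (∑ i, u i = 0) →
      L.mulVec u = lam • u) :
    ∀ σ : Equiv.Perm (Fin N), (∀ j ∉ C, σ j = j) →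
      (σ.permMatrix ℝ)⁻¹ * L * σ.permMatrix ℝ = L := by
  intro σ hσ
  rw [Matrix.inv_permMatrix_mul_mul_permMatrix]
  exact Matrix.submatrix_perm_eq_self_of_forall_mulVec_eq_smul hsym hU
    fun j hj => Perm.inv_eq_iff_eq.mpr (hσ j hj).symm

/-- If there is λ ∈ ℝ such that Lu = λu for every u in the subspace
U = {u : u_j = 0 for j ∉ C, ∑ u_i = 0}, then every permutation σ fixing all indices
outside C pointwise preserves L (P⁻¹LP = L for its permutation matrix P). -/
theorem degenerate_eigenspace_gives_symmetries
    (N : ℕ) (L : Matrix (Fin N) (Fin N) ℝ)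
    (hsym : L.IsSymm) (hrow : ∀ i, ∑ j, L i j = 0)
    (C : Finset (Fin N)) (hk : 2 ≤ C.card)
    (lam : ℝ)
    (hU : ∀ u : Fin N → ℝ, (∀ j ∉ C, u j = 0) → (∑ i, u i = 0) →
      L.mulVec u = lam • u) :
    ∀ σ : Equiv.Perm (Fin N), (∀ j ∉ C, σ j = j) →
      (σ.permMatrix ℝ)⁻¹ * L * σ.permMatrix ℝ = L :=
  degenerate_eigenspace_gives_symmetries_general N L hsym C lam hU
end
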